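/- arXiv:1809.00622 — 2 statements merged into one kernel-verified Lean document; each statement's English description precedes it below -/
import Mathlib

section
/- Let μ be a complex number with Re(μ) ≥ 0 and Im(μ) ≥ 0 satisfying |μ − √(2/3)| < √(8/3) (or μ = i√2), with μ < √(2/3) if Im(μ) = 0, and additionally Im(μ) ≥ √((√6 − Re(μ)) · Re(μ)). Then the two-qubit reduced density matrix of the 4-qubit state ψ_μ, obtained by tracing out any two of the four qubits, has a positive semidefinite partial transpose; equivalently, its negativity vanishes. -/
open scoped BigOperators ComplexConjugate ComplexOrder

noncomputable section

/-- A single-qubit unit vector in `ℂ²`. -/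
def IsUnitQubit (e : Fin 2 → ℂ) : Prop := ∑ j, Complex.normSq (e j) = 1

/-- Norm-one condition for a multiqubit vector on the register `ι`. -/
def IsUnitState {ι : Type*} [Fintype ι] [DecidableEq ι] (ψ : (ι → Fin 2) → ℂ) : Prop :=
  ∑ x, Complex.normSq (ψ x) = 1

/-- The product state `⊗ᵢ eᵢ`. -/
def prodState {ι : Type*} [Fintype ι] (e : ι → Fin 2 → ℂ) : (ι → Fin 2) → ℂ :=
  fun x => ∏ i, e i (x i)

/-- A pure state is a product state if it is a tensor product of single-qubit unit vectors. -/
def IsProductState {ι : Type*} [Fintype ι] (ψ : (ι → Fin 2) → ℂ) : Prop :=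
  ∃ e : ι → Fin 2 → ℂ, (∀ i, IsUnitQubit (e i)) ∧ ψ = prodState e

/-- A pure state is entangled if it is not a product state. -/
def IsEntangledState {ι : Type*} [Fintype ι] (ψ : (ι → Fin 2) → ℂ) : Prop :=
  ¬ IsProductState ψ

/-- The projector `|v⟩⟨v|` as a matrix. -/
def proj {α : Type*} (v : α → ℂ) : Matrix α α ℂ :=
  Matrix.of fun x y => v x * conj (v y)

/-- A density matrix on the qubit register `ι` is separable if it is a finite convex
combination of projectors onto product states (and entangled otherwise). -/
def IsSeparableDensity {ι : Type*} [Fintype ι] (ρ : Matrix (ι → Fin 2) (ι → Fin 2) ℂ) : Prop :=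
  ∃ (n : ℕ) (w : Fin n → ℝ) (e : Fin n → ι → Fin 2 → ℂ),
    (∀ m, 0 ≤ w m) ∧ (∑ m, w m = 1) ∧ (∀ m i, IsUnitQubit (e m i)) ∧
    ρ = ∑ m, (w m : ℂ) • proj (prodState (e m))

/-- Assemble a full assignment of the `N` qubits from an assignment `x` of the qubits outside
`S` and an assignment `z` of the qubits in `S`. -/
def mergeCompl {N : ℕ} (S : Finset (Fin N)) (x : {i : Fin N // i ∉ S} → Fin 2)
    (z : {i : Fin N // i ∈ S} → Fin 2) : Fin N → Fin 2 :=
  fun i => if h : i ∈ S then z ⟨i, h⟩ else x ⟨i, h⟩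

/-- The reduced density operator `ρ_{¬S}(ψ)`: the partial trace of `|ψ⟩⟨ψ|` over the qubits
in `S`. -/
def reducedState {N : ℕ} (ψ : (Fin N → Fin 2) → ℂ) (S : Finset (Fin N)) :
    Matrix ({i : Fin N // i ∉ S} → Fin 2) ({i : Fin N // i ∉ S} → Fin 2) ℂ :=
  Matrix.of fun x y => ∑ z : {i : Fin N // i ∈ S} → Fin 2,
    ψ (mergeCompl S x z) * conj (ψ (mergeCompl S y z))

/-- The `k`-excitation Dicke state `|D_4^{(k)}⟩` of 4 qubits. -/
def dicke4 (k : ℕ) : (Fin 4 → Fin 2) → ℂ :=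
  fun x => if (∑ i, ((x i : ℕ))) = k then ((1 / Real.sqrt ((4 : ℕ).choose k) : ℝ) : ℂ) else 0

/-- The 4-qubit state `ψ_μ = (|D_4^{(0)}⟩ + μ |D_4^{(2)}⟩ + |D_4^{(4)}⟩)/√(2 + |μ|²)`. -/
def psiMu (μ : ℂ) : (Fin 4 → Fin 2) → ℂ :=
  fun x => (dicke4 0 x + μ * dicke4 2 x + dicke4 4 x)
    / ((Real.sqrt (2 + Complex.normSq μ) : ℝ) : ℂ)

/-- Reassemble a full assignment of the 4 qubits from an assignment `v` of the two kept qubits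
`q₁`, `q₂` and an assignment `z` of the other two. -/
def extendPair (q₁ q₂ : Fin 4) (v : Fin 2 → Fin 2)
    (z : {i : Fin 4 // i ≠ q₁ ∧ i ≠ q₂} → Fin 2) : Fin 4 → Fin 2 :=
  fun i => if h₁ : i = q₁ then v 0 else if h₂ : i = q₂ then v 1 else z ⟨i, ⟨h₁, h₂⟩⟩

/-- The two-qubit reduced density matrix of a 4-qubit state `ψ` obtained by tracing out all
qubits but `q₁` (kept as first qubit) and `q₂` (kept as second qubit). -/
def rhoPair (ψ : (Fin 4 → Fin 2) → ℂ) (q₁ q₂ : Fin 4) :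
    Matrix (Fin 2 → Fin 2) (Fin 2 → Fin 2) ℂ :=
  Matrix.of fun v w => ∑ z : {i : Fin 4 // i ≠ q₁ ∧ i ≠ q₂} → Fin 2,
    ψ (extendPair q₁ q₂ v z) * conj (ψ (extendPair q₁ q₂ w z))

/-- The partial transpose of a two-qubit density matrix with respect to the first qubit:
`ρ^{T₁}_{(i,j),(k,l)} = ρ_{(k,j),(i,l)}`. -/
def ptransposeFirst (ρ : Matrix (Fin 2 → Fin 2) (Fin 2 → Fin 2) ℂ) :
    Matrix (Fin 2 → Fin 2) (Fin 2 → Fin 2) ℂ :=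
  Matrix.of fun v w => ρ ![w 0, v 1] ![v 0, w 1]

/-!
The amplitudes of `ψ_μ` depend only on the Hamming weight, with profile `(a, 0, b, 0, a)` where
`a = 1/N`, `b = μ/(√6 N)` and `N = √(2 + |μ|²)`. Hence every two-qubit marginal is the same
matrix, and its partial transpose is diagonal in the Bell basis with eigenvalues `a² + 3|b|²`,
`a² - |b|²` and `2(|b|² ± a Re b)`. These are nonnegative as soon as `|b| ≤ a` and
`|a Re b| ≤ |b|²`, i.e. `|μ|² ≤ 6` (true on the domain, which lies in the disc of radius `√6`)
and `√6 |Re μ| ≤ |μ|²`; for `Re μ ≥ 0` the latter is the condition `Im μ ≥ √((√6 - Re μ) Re μ)`.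
-/

open Complex

def qubitWeight {ι : Type*} [Fintype ι] (x : ι → Fin 2) : ℕ := ∑ i, (x i : ℕ)

lemma qubitWeight_pair (x : Fin 2 → Fin 2) : qubitWeight x = (x 0 : ℕ) + x 1 :=
  Fin.sum_univ_two _

lemma sum_qubitWeight_of_card_eq_two {S : Type*} [Fintype S] [DecidableEq S]
    (hS : Fintype.card S = 2) {M : Type*} [AddCommMonoid M] (F : ℕ → M) :
    ∑ z : S → Fin 2, F (qubitWeight z) = ∑ s : Fin 2, ∑ t : Fin 2, F (s + t) := by
  let e : (Fin 2 → Fin 2) ≃ (S → Fin 2) :=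
    (Fintype.equivFinOfCardEq hS).symm.arrowCongr (Equiv.refl _)
  have hweight (g : Fin 2 → Fin 2) : qubitWeight (e g) = qubitWeight g :=
    Equiv.sum_comp (Fintype.equivFinOfCardEq hS) (fun i => (g i : ℕ))
  rw [← Fintype.sum_prod_type', ← e.sum_comp]
  refine Fintype.sum_equiv (piFinTwoEquiv fun _ => Fin 2) _ _ fun g => ?_
  simp [hweight, qubitWeight_pair]

lemma Fintype.card_subtype_ne_and_ne {α : Type*} [Fintype α] [DecidableEq α] {a b : α}
    (h : a ≠ b) :
    Fintype.card {i // i ≠ a ∧ i ≠ b} = Fintype.card α - 2 := by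
  rw [Fintype.card_subtype, ← Finset.card_pair h, ← Finset.card_univ,
    ← Finset.card_sdiff_of_subset (Finset.subset_univ _)]
  congr 1
  ext i
  simp [not_or]

lemma qubitWeight_extendPair {q₁ q₂ : Fin 4} (h : q₁ ≠ q₂) (v : Fin 2 → Fin 2)
    (z : {i : Fin 4 // i ≠ q₁ ∧ i ≠ q₂} → Fin 2) :
    qubitWeight (extendPair q₁ q₂ v z) = qubitWeight v + qubitWeight z := by
  rw [qubitWeight, ← Finset.sum_add_sum_compl {q₁, q₂}, Finset.sum_pair h, qubitWeight_pair,
    Finset.sum_subtype (p := fun i => i ≠ q₁ ∧ i ≠ q₂) _ (fun i => by simp)]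
  congr 1
  · simp [extendPair, h.symm]
  · exact Finset.sum_congr rfl fun j _ => by simp [extendPair, j.2.1, j.2.2]

lemma rhoPair_apply_of_weight (f : ℕ → ℂ) {ψ : (Fin 4 → Fin 2) → ℂ}
    (hψ : ∀ x, ψ x = f (qubitWeight x)) {q₁ q₂ : Fin 4} (h : q₁ ≠ q₂) (v w : Fin 2 → Fin 2) :
    rhoPair ψ q₁ q₂ v w = ∑ s : Fin 2, ∑ t : Fin 2,
      f (qubitWeight v + (s + t)) * conj (f (qubitWeight w + (s + t))) := by
  simp only [rhoPair, Matrix.of_apply, hψ, qubitWeight_extendPair h]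
  exact sum_qubitWeight_of_card_eq_two (Fintype.card_subtype_ne_and_ne h) fun n =>
    f (qubitWeight v + n) * conj (f (qubitWeight w + n))

lemma ptransposeFirst_rhoPair_apply_of_weight (f : ℕ → ℂ) {ψ : (Fin 4 → Fin 2) → ℂ}
    (hψ : ∀ x, ψ x = f (qubitWeight x)) {q₁ q₂ : Fin 4} (h : q₁ ≠ q₂) (i j k l : Fin 2) :
    ptransposeFirst (rhoPair ψ q₁ q₂) ![i, j] ![k, l] = ∑ s : Fin 2, ∑ t : Fin 2,
      f (k + j + (s + t)) * conj (f (i + l + (s + t))) := by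
  simp [ptransposeFirst, rhoPair_apply_of_weight f hψ h, qubitWeight_pair]

lemma Matrix.ext_fin_two_pi {β α : Type*} {M N : Matrix (Fin 2 → β) (Fin 2 → β) α}
    (h : ∀ i j k l, M ![i, j] ![k, l] = N ![i, j] ![k, l]) : M = N := by
  ext v w
  have eta (u : Fin 2 → β) : ![u 0, u 1] = u := by ext i; fin_cases i <;> rfl
  simpa only [eta] using h (v 0) (v 1) (w 0) (w 1)

/-- Weight profile of `a (|0000⟩ + |1111⟩) + b ∑_{|x| = 2} |x⟩`. -/
def evenWeightAmp (a : ℝ) (b : ℂ) (k : ℕ) : ℂ :=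
  if k = 0 ∨ k = 4 then a else if k = 2 then b else 0

/- Bell vectors, unnormalised (norm `√2`). -/
def bellPhiPlus (v : Fin 2 → Fin 2) : ℂ := if v 0 = v 1 then 1 else 0
def bellPhiMinus (v : Fin 2 → Fin 2) : ℂ :=
  if v 0 = v 1 then (if v 0 = 0 then 1 else -1) else 0
def bellPsiPlus (v : Fin 2 → Fin 2) : ℂ := if v 0 = v 1 then 0 else 1
def bellPsiMinus (v : Fin 2 → Fin 2) : ℂ :=
  if v 0 = v 1 then 0 else (if v 0 = 0 then 1 else -1)

theorem ptransposeFirst_rhoPair_evenWeightAmp (a : ℝ) (b : ℂ) {ψ : (Fin 4 → Fin 2) → ℂ}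
    (hψ : ∀ x, ψ x = evenWeightAmp a b (qubitWeight x)) {q₁ q₂ : Fin 4} (h : q₁ ≠ q₂) :
    ptransposeFirst (rhoPair ψ q₁ q₂) =
      ((a ^ 2 + 3 * normSq b) / 2) • proj bellPhiPlus
        + ((a ^ 2 - normSq b) / 2) • proj bellPhiMinus
        + (normSq b + a * b.re) • proj bellPsiPlus
        + (normSq b - a * b.re) • proj bellPsiMinus := by
  refine Matrix.ext_fin_two_pi fun i j k l => ?_
  rw [ptransposeFirst_rhoPair_apply_of_weight _ hψ h]
  fin_cases i <;> fin_cases j <;> fin_cases k <;> fin_cases l <;>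
    simp [evenWeightAmp, proj, bellPhiPlus, bellPhiMinus, bellPsiPlus, bellPsiMinus,
      Fin.sum_univ_two, mul_conj, re_eq_add_conj] <;> ring

theorem posSemidef_ptransposeFirst_rhoPair_evenWeightAmp (a : ℝ) (b : ℂ)
    {ψ : (Fin 4 → Fin 2) → ℂ} (hψ : ∀ x, ψ x = evenWeightAmp a b (qubitWeight x))
    {q₁ q₂ : Fin 4} (h : q₁ ≠ q₂) (hb : normSq b ≤ a ^ 2) (hre : |a * b.re| ≤ normSq b) :
    (ptransposeFirst (rhoPair ψ q₁ q₂)).PosSemidef := by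
  have hproj (u : (Fin 2 → Fin 2) → ℂ) : (proj u).PosSemidef :=
    Matrix.posSemidef_vecMulVec_self_star u
  obtain ⟨hre₁, hre₂⟩ := abs_le.mp hre
  rw [ptransposeFirst_rhoPair_evenWeightAmp a b hψ h]
  refine (((hproj _).smul ?_).add ((hproj _).smul ?_)).add ((hproj _).smul ?_) |>.add
    ((hproj _).smul ?_)
  all_goals nlinarith [normSq_nonneg b, sq_nonneg a]

lemma psiMu_eq_evenWeightAmp (μ : ℂ) (x : Fin 4 → Fin 2) :
    psiMu μ x = evenWeightAmp (√6 * (√6 * √(2 + normSq μ))⁻¹)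
      ((√6 * √(2 + normSq μ))⁻¹ * μ) (qubitWeight x) := by
  have h6 : (√6 : ℂ) ≠ 0 := by norm_num
  unfold psiMu dicke4 evenWeightAmp qubitWeight
  generalize ∑ i, (x i : ℕ) = k
  obtain rfl | rfl | rfl | ⟨h0, h2, h4⟩ : k = 0 ∨ k = 2 ∨ k = 4 ∨ (k ≠ 0 ∧ k ≠ 2 ∧ k ≠ 4) := by
    omega
  all_goals simp [*, Nat.choose] <;> field_simp

lemma normSq_le_six {μ : ℂ}
    (hdom : ‖μ - (√(2 / 3) : ℝ)‖ < √(8 / 3) ∨ μ = I * (√2 : ℝ)) : normSq μ ≤ 6 := by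
  rcases hdom with hdisc | rfl
  · have hsqrt : √(8 / 3) = 2 * √(2 / 3) := by
      rw [show (8 / 3 : ℝ) = 2 ^ 2 * (2 / 3) by norm_num, Real.sqrt_mul (by norm_num),
        Real.sqrt_sq (by norm_num)]
    have hnorm : ‖μ‖ < 3 * √(2 / 3) := by
      calc ‖μ‖ ≤ ‖μ - (√(2 / 3) : ℝ)‖ + ‖((√(2 / 3) : ℝ) : ℂ)‖ := norm_le_norm_sub_add _ _
        _ < 3 * √(2 / 3) := by rw [norm_real, Real.norm_of_nonneg (by positivity)]; linarith
    rw [normSq_eq_norm_sq]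
    nlinarith [norm_nonneg μ, Real.sq_sqrt (show (0 : ℝ) ≤ 2 / 3 by norm_num)]
  · norm_num

lemma sqrt_six_mul_re_le_normSq {μ : ℂ} (h : √((√6 - μ.re) * μ.re) ≤ μ.im) :
    √6 * μ.re ≤ normSq μ := by
  have : (√6 - μ.re) * μ.re ≤ μ.im ^ 2 :=
    calc (√6 - μ.re) * μ.re ≤ max ((√6 - μ.re) * μ.re) 0 := le_max_left _ _
      _ = √((√6 - μ.re) * μ.re) ^ 2 := Real.sq_sqrt'.symm
      _ ≤ μ.im ^ 2 := pow_le_pow_left₀ (Real.sqrt_nonneg _) h 2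
  rw [normSq_apply]
  nlinarith

theorem psiMu_two_qubit_ppt_general (μ : ℂ)
    (hre : 0 ≤ μ.re)
    (hdom : ‖μ - (Real.sqrt (2 / 3) : ℝ)‖ < Real.sqrt (8 / 3)
      ∨ μ = Complex.I * (Real.sqrt 2 : ℝ))
    (hfragile : Real.sqrt ((Real.sqrt 6 - μ.re) * μ.re) ≤ μ.im) :
    ∀ q₁ q₂ : Fin 4, q₁ ≠ q₂ →
      (ptransposeFirst (rhoPair (psiMu μ) q₁ q₂)).PosSemidef := by
  intro q₁ q₂ hq
  set c : ℝ := (√6 * √(2 + normSq μ))⁻¹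
  have h6 : √6 ^ 2 = 6 := Real.sq_sqrt (by norm_num)
  refine posSemidef_ptransposeFirst_rhoPair_evenWeightAmp _ _ (psiMu_eq_evenWeightAmp μ) hq
    ?_ ?_
  · rw [normSq_mul, normSq_ofReal, mul_pow, h6]
    nlinarith [normSq_le_six hdom, mul_self_nonneg c]
  · rw [re_ofReal_mul, normSq_mul, normSq_ofReal, abs_of_nonneg (by positivity)]
    nlinarith [sqrt_six_mul_re_le_normSq hfragile, mul_self_nonneg c]

/-- For `μ` in the fundamental domain `S` of the `D_{1,1,1,1}` family
(`Re μ ≥ 0`, `Im μ ≥ 0`, `|μ − √(2/3)| < √(8/3)` or `μ = i√2`, and `μ < √(2/3)` when `μ` is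
real) satisfying moreover `Im μ ≥ √((√6 − Re μ)·Re μ)`, the two-qubit reduced density matrix
of `ψ_μ`, obtained by tracing out any two of the four qubits, has positive semidefinite
partial transpose, i.e. its negativity vanishes. -/
theorem psiMu_two_qubit_ppt (μ : ℂ)
    (hre : 0 ≤ μ.re) (him : 0 ≤ μ.im)
    (hdom : ‖μ - (Real.sqrt (2 / 3) : ℝ)‖ < Real.sqrt (8 / 3)
      ∨ μ = Complex.I * (Real.sqrt 2 : ℝ))
    (hreal : μ.im = 0 → μ.re < Real.sqrt (2 / 3))
    (hfragile : Real.sqrt ((Real.sqrt 6 - μ.re) * μ.re) ≤ μ.im) :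
    ∀ q₁ q₂ : Fin 4, q₁ ≠ q₂ →
      (ptransposeFirst (rhoPair (psiMu μ) q₁ q₂)).PosSemidef :=
  psiMu_two_qubit_ppt_general μ hre hdom hfragile
end
end

section
/- Let μ be a nonzero complex number with Re(μ) ≥ 0 and Im(μ) ≥ 0 satisfying |μ − √(2/3)| < √(8/3) (or μ = i√2), with μ < √(2/3) if Im(μ) = 0. Then the three-qubit reduced density matrix of the 4-qubit state ψ_μ, obtained by tracing out one qubit, has a partial transpose with respect to one of its qubits that is not positive semidefinite; in particular this reduced state is entangled, so ψ_μ is robust with respect to the loss of a single qubit. -/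
open scoped BigOperators ComplexConjugate ComplexOrder

noncomputable section

/-- Reassemble a full assignment of the 4 qubits from an assignment `x` of the qubits other
than `q` and a value `z` for qubit `q`. -/
def extendOne (q : Fin 4) (x : {i : Fin 4 // i ≠ q} → Fin 2) (z : Fin 2) : Fin 4 → Fin 2 :=
  fun i => if h : i = q then z else x ⟨i, h⟩

/-- The three-qubit reduced density matrix of a 4-qubit state `ψ` obtained by tracing out
qubit `q`. -/
def rhoTriple (ψ : (Fin 4 → Fin 2) → ℂ) (q : Fin 4) :
    Matrix ({i : Fin 4 // i ≠ q} → Fin 2) ({i : Fin 4 // i ≠ q} → Fin 2) ℂ :=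
  Matrix.of fun x y => ∑ z : Fin 2, ψ (extendOne q x z) * conj (ψ (extendOne q y z))

/-- The partial transpose of a multiqubit density matrix with respect to the qubit `r`. -/
def ptransposeAt {ι : Type*} [Fintype ι] [DecidableEq ι]
    (ρ : Matrix (ι → Fin 2) (ι → Fin 2) ℂ) (r : ι) :
    Matrix (ι → Fin 2) (ι → Fin 2) ℂ :=
  Matrix.of fun x y => ρ (Function.update x r (y r)) (Function.update y r (x r))

/-! Tracing out one qubit of `ψ_μ` leaves amplitudes that depend only on the number of
excitations and vanish at odd weights. In the partial transpose with respect to a qubit `r`, take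
the weight-two basis states `a`, `b` with `a r = 1`, `b r = 0`: swapping their `r`-entries gives
weights `1` and `3`, so the principal `2 × 2` block at `a, b` has diagonal entries `|A₂|²` and
off-diagonal product `|A₂|² |A₄|²`, where `A₂ = μ / √(6 (2 + |μ|²))` and `A₄ = 1 / √(2 + |μ|²)`.
Its determinant is negative as soon as `0 < |μ|² < 6`, which holds on the whole domain because
`|μ| < √(2/3) + √(8/3) = √6`. Separable states have positive partial transposes. -/

open Matrix

section PPT

variable {ι : Type*} [Fintype ι] [DecidableEq ι]

theorem proj_posSemidef {α : Type*} [Fintype α] (v : α → ℂ) : (proj v).PosSemidef :=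
  posSemidef_vecMulVec_self_star v

theorem prodState_update_apply (e : ι → Fin 2 → ℂ) (x : ι → Fin 2) (r : ι) (b : Fin 2) :
    prodState e (Function.update x r b) = e r b * ∏ i ∈ Finset.univ \ {r}, e i (x i) := by
  simp only [prodState, Function.apply_update (fun i => e i),
    Finset.prod_update_of_mem (Finset.mem_univ r)]

theorem prodState_update (e : ι → Fin 2 → ℂ) (x : ι → Fin 2) (r : ι) (f : Fin 2 → ℂ) :
    prodState (Function.update e r f) x = f (x r) * ∏ i ∈ Finset.univ \ {r}, e i (x i) := by
  simp only [prodState, Function.apply_update (fun i (g : Fin 2 → ℂ) => g (x i)),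
    Finset.prod_update_of_mem (Finset.mem_univ r)]

theorem ptransposeAt_proj_prodState (e : ι → Fin 2 → ℂ) (r : ι) :
    ptransposeAt (proj (prodState e)) r = proj (prodState (Function.update e r (star (e r)))) := by
  ext x y
  simp only [ptransposeAt, proj, of_apply, prodState_update_apply, prodState_update, Pi.star_apply,
    map_mul, Complex.star_def, Complex.conj_conj]
  ring

theorem ptransposeAt_sum {κ : Type*} (s : Finset κ) (ρ : κ → Matrix (ι → Fin 2) (ι → Fin 2) ℂ)
    (r : ι) : ptransposeAt (∑ m ∈ s, ρ m) r = ∑ m ∈ s, ptransposeAt (ρ m) r := by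
  ext x y
  simp [ptransposeAt, Matrix.sum_apply]

theorem ptransposeAt_smul (c : ℂ) (ρ : Matrix (ι → Fin 2) (ι → Fin 2) ℂ) (r : ι) :
    ptransposeAt (c • ρ) r = c • ptransposeAt ρ r := rfl

theorem IsSeparableDensity.posSemidef_ptransposeAt {ρ : Matrix (ι → Fin 2) (ι → Fin 2) ℂ}
    (h : IsSeparableDensity ρ) (r : ι) : (ptransposeAt ρ r).PosSemidef := by
  obtain ⟨n, w, e, hw, -, -, rfl⟩ := h
  rw [ptransposeAt_sum]
  refine posSemidef_sum _ fun m _ => ?_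
  rw [ptransposeAt_smul, ptransposeAt_proj_prodState]
  exact (proj_posSemidef _).smul (Complex.zero_le_real.2 (hw m))

end PPT

theorem Matrix.PosSemidef.apply_mul_apply_le {n : Type*} [Fintype n] [DecidableEq n]
    {M : Matrix n n ℂ} (hM : M.PosSemidef) (i j : n) : M i j * M j i ≤ M i i * M j j := by
  have := (hM.submatrix ![i, j]).det_nonneg
  rw [det_fin_two] at this
  simpa [sub_nonneg] using this

theorem not_mul_conj_le_of_normSq_lt {a b : ℂ} (ha : a ≠ 0)
    (hab : Complex.normSq a < Complex.normSq b) :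
    ¬ a * conj b * (b * conj a) ≤ a * conj a * (a * conj a) := by
  have hrw : a * conj b * (b * conj a) = ((Complex.normSq a * Complex.normSq b : ℝ) : ℂ) := by
    rw [Complex.ofReal_mul, ← Complex.mul_conj, ← Complex.mul_conj]; ring
  rw [hrw, Complex.mul_conj, ← Complex.ofReal_mul, Complex.real_le_real, not_le]
  exact mul_lt_mul_of_pos_left hab (Complex.normSq_pos.2 ha)

def excitations {ι : Type*} [Fintype ι] (x : ι → Fin 2) : ℕ := ∑ i, (x i : ℕ)

theorem excitations_update_add {ι : Type*} [Fintype ι] [DecidableEq ι] (x : ι → Fin 2) (r : ι)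
    (b : Fin 2) : excitations (Function.update x r b) + x r = excitations x + b := by
  simp only [excitations, Function.apply_update (fun _ (c : Fin 2) => (c : ℕ)),
    Finset.sum_update_of_mem (Finset.mem_univ r),
    Finset.sum_eq_add_sum_sdiff_singleton_of_mem (Finset.mem_univ r) (fun i => (x i : ℕ))]
  ring

theorem excitations_extendOne (q : Fin 4) (x : {i : Fin 4 // i ≠ q} → Fin 2) (z : Fin 2) :
    excitations (extendOne q x z) = z + excitations x := by
  simp only [excitations, Fintype.sum_eq_add_sum_subtype_ne _ q, extendOne, dif_pos]
  exact congrArg _ (Finset.sum_congr rfl fun i _ => by rw [dif_neg i.2])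

def psiMuAmp (μ : ℂ) (k : ℕ) : ℂ :=
  (if k = 0 ∨ k = 4 then 1 else if k = 2 then μ / (Real.sqrt 6 : ℝ) else 0) /
    (Real.sqrt (2 + Complex.normSq μ) : ℝ)

theorem psiMu_apply (μ : ℂ) (x : Fin 4 → Fin 2) : psiMu μ x = psiMuAmp μ (excitations x) := by
  unfold psiMu dicke4 psiMuAmp
  set k := excitations x
  change ((if k = 0 then _ else _) + μ * (if k = 2 then _ else _) + (if k = 4 then _ else _)) / _ = _
  split_ifs <;> first | omega | norm_num [Nat.choose, div_eq_mul_inv]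

theorem rhoTriple_psiMu_apply (μ : ℂ) (q : Fin 4) (x y : {i : Fin 4 // i ≠ q} → Fin 2) :
    rhoTriple (psiMu μ) q x y = psiMuAmp μ (excitations x) * conj (psiMuAmp μ (excitations y))
      + psiMuAmp μ (excitations x + 1) * conj (psiMuAmp μ (excitations y + 1)) := by
  simp [rhoTriple, psiMu_apply, excitations_extendOne, add_comm]

theorem psiMuAmp_eq_zero_of_odd (μ : ℂ) {k : ℕ} (hk : Odd k) : psiMuAmp μ k = 0 := by
  obtain ⟨j, rfl⟩ := hk
  simp [psiMuAmp]
  omega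

theorem normSq_psiMuAmp_two_lt_four {μ : ℂ} (h6 : Complex.normSq μ < 6) :
    Complex.normSq (psiMuAmp μ 2) < Complex.normSq (psiMuAmp μ 4) := by
  have hn := Complex.normSq_nonneg μ
  simp only [psiMuAmp, Complex.normSq_div, Complex.normSq_ofReal]
  norm_num
  rw [← mul_inv, Real.mul_self_sqrt (by positivity), div_div, div_lt_iff₀ (by positivity)]
  field_simp
  linarith

theorem psiMuAmp_two_ne_zero {μ : ℂ} (hμ : μ ≠ 0) : psiMuAmp μ 2 ≠ 0 := by
  have hpos : 0 < 2 + Complex.normSq μ := by linarith [Complex.normSq_nonneg μ]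
  simp [psiMuAmp, hμ, Real.sqrt_ne_zero', hpos]

theorem ptransposeAt_rhoTriple_psiMu_apply (μ : ℂ) {q : Fin 4} (r : {i : Fin 4 // i ≠ q})
    (x y : {i : Fin 4 // i ≠ q} → Fin 2) :
    ptransposeAt (rhoTriple (psiMu μ) q) r x y =
      psiMuAmp μ (excitations (Function.update x r (y r))) *
          conj (psiMuAmp μ (excitations (Function.update y r (x r))))
        + psiMuAmp μ (excitations (Function.update x r (y r)) + 1) *
          conj (psiMuAmp μ (excitations (Function.update y r (x r)) + 1)) :=
  rhoTriple_psiMu_apply μ q _ _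

theorem not_posSemidef_ptransposeAt_rhoTriple_psiMu {μ : ℂ} (hμ : μ ≠ 0)
    (h6 : Complex.normSq μ < 6) (q : Fin 4) (r : {i : Fin 4 // i ≠ q}) :
    ¬ (ptransposeAt (rhoTriple (psiMu μ) q) r).PosSemidef := by
  intro hPT
  have hcard : Fintype.card {i : Fin 4 // i ≠ q} = 3 := by simp [Fintype.card_subtype_compl]
  obtain ⟨s, hsr⟩ := Fintype.exists_ne_of_one_lt_card (by omega) r
  set one : {i : Fin 4 // i ≠ q} → Fin 2 := fun _ => 1
  set a := Function.update one s 0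
  set b := Function.update one r 0
  have hone : excitations one = 3 := by simp [one, excitations, hcard]
  have har : a r = 1 := Function.update_of_ne hsr.symm _ _
  have hbr : b r = 0 := Function.update_self _ _ _
  have hba : Function.update b r (a r) = one := by
    rw [har, Function.update_idem, Function.update_eq_self_iff]
  have hwa : excitations a = 2 := by
    have h := excitations_update_add one s 0
    rw [hone, show one s = 1 from rfl] at h
    simpa using h
  have hwb : excitations b = 2 := by
    have h := excitations_update_add one r 0
    rw [hone, show one r = 1 from rfl] at h
    simpa using h
  have hwab : excitations (Function.update a r (b r)) = 1 := by
    have h := excitations_update_add a r 0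
    rw [hwa, har] at h
    simpa [hbr] using h
  have hle := hPT.apply_mul_apply_le a b
  simp only [ptransposeAt_rhoTriple_psiMu_apply, Function.update_eq_self, hba, hwa, hwb, hwab, hone,
    Nat.reduceAdd, psiMuAmp_eq_zero_of_odd μ (by decide : Odd 3),
    psiMuAmp_eq_zero_of_odd μ (by decide : Odd 1), map_zero, zero_mul, zero_add, add_zero] at hle
  exact not_mul_conj_le_of_normSq_lt (psiMuAmp_two_ne_zero hμ) (normSq_psiMuAmp_two_lt_four h6) hle

theorem normSq_lt_six_of_norm_sub_lt {μ : ℂ}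
    (h : ‖μ - (Real.sqrt (2 / 3) : ℝ)‖ < Real.sqrt (8 / 3)) : Complex.normSq μ < 6 := by
  set c := Real.sqrt (2 / 3)
  have hc : 0 ≤ c := Real.sqrt_nonneg _
  have hc2 : c ^ 2 = 2 / 3 := Real.sq_sqrt (by norm_num)
  have h83 : Real.sqrt (8 / 3) = 2 * c := by
    rw [show (8 / 3 : ℝ) = 2 ^ 2 * (2 / 3) by norm_num, Real.sqrt_mul (by norm_num),
      Real.sqrt_sq (by norm_num)]
  have hμ : ‖μ‖ < 3 * c :=
    calc ‖μ‖ ≤ ‖μ - (c : ℂ)‖ + ‖(c : ℂ)‖ := norm_le_norm_sub_add μ c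
      _ < 2 * c + c := by rw [Complex.norm_real, Real.norm_of_nonneg hc]; linarith
      _ = 3 * c := by ring
  rw [← Complex.sq_norm]
  nlinarith [norm_nonneg μ]

theorem psiMu_three_qubit_nppt_general (μ : ℂ) (hμ : μ ≠ 0)
    (hdom : ‖μ - (Real.sqrt (2 / 3) : ℝ)‖ < Real.sqrt (8 / 3)
      ∨ μ = Complex.I * (Real.sqrt 2 : ℝ)) :
    ∀ q : Fin 4,
      (∃ r : {i : Fin 4 // i ≠ q}, ¬ (ptransposeAt (rhoTriple (psiMu μ) q) r).PosSemidef) ∧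
      ¬ IsSeparableDensity (rhoTriple (psiMu μ) q) := by
  have h6 : Complex.normSq μ < 6 := by
    rcases hdom with h | rfl
    · exact normSq_lt_six_of_norm_sub_lt h
    · norm_num [Complex.normSq_ofReal]
  intro q
  have hNPT := not_posSemidef_ptransposeAt_rhoTriple_psiMu hμ h6 q
  let r : {i : Fin 4 // i ≠ q} := ⟨q + 1, by simp⟩
  exact ⟨⟨r, hNPT r⟩, fun hsep => hNPT r (hsep.posSemidef_ptransposeAt r)⟩

/-- For every nonzero `μ` in the fundamental domain `S` of the
`D_{1,1,1,1}` family (`Re μ ≥ 0`, `Im μ ≥ 0`, `|μ − √(2/3)| < √(8/3)` or `μ = i√2`, and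
`μ < √(2/3)` when `μ` is real), the three-qubit reduced density matrix of `ψ_μ` obtained by
tracing out any one qubit has a partial transpose with respect to one of its qubits that is
not positive semidefinite; in particular this reduced state is entangled, so `ψ_μ` is robust
with respect to the loss of a single qubit. -/
theorem psiMu_three_qubit_nppt (μ : ℂ) (hμ : μ ≠ 0)
    (hre : 0 ≤ μ.re) (him : 0 ≤ μ.im)
    (hdom : ‖μ - (Real.sqrt (2 / 3) : ℝ)‖ < Real.sqrt (8 / 3)
      ∨ μ = Complex.I * (Real.sqrt 2 : ℝ))
    (hreal : μ.im = 0 → μ.re < Real.sqrt (2 / 3)) :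
    ∀ q : Fin 4,
      (∃ r : {i : Fin 4 // i ≠ q}, ¬ (ptransposeAt (rhoTriple (psiMu μ) q) r).PosSemidef) ∧
      ¬ IsSeparableDensity (rhoTriple (psiMu μ) q) :=
  psiMu_three_qubit_nppt_general μ hμ hdom
end
end
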